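/- arXiv:1301.7075 — 6 statements merged into one kernel-verified Lean document; each statement's English description precedes it below -/
import Mathlib

section
/- Let gamma ∈ (0,1), N ≥ 2, h > 0, and X ∈ R^N strictly increasing with sum_{i=1}^N X_i = 0. Then the discrete interaction energy W_gamma[X] = (h^2/(2gamma)) * sum_{i≠j} |X_i - X_j|^{-gamma} satisfies W_gamma[X] ≥ (h^2/gamma) * (N(N-1)/2) * (2|X|^2/(N-1))^{-gamma/2}. -/
/-!
The energy is a sum over the `N(N-1)` ordered pairs `i ≠ j` of `z ^ (-γ/2)` with
`z = (X i - X j) ^ 2 > 0`. Since `z ↦ z ^ (-γ/2)` is convex, Jensen's inequality bounds it below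
by `N(N-1)` times its value at the mean of these `z`; and when `∑ X i = 0` the `z` add up to
`2 N |X|²`, so their mean is `2 |X|² / (N - 1)`.
-/

open Finset Real

theorem convexOn_rpow_of_nonpos {p : ℝ} (hp : p ≤ 0) :
    ConvexOn ℝ (Set.Ioi 0) fun x : ℝ ↦ x ^ p := by
  refine convexOn_of_deriv2_nonneg' (convex_Ioi 0)
    (fun x hx ↦ (differentiableAt_rpow_const_of_ne p (ne_of_gt hx)).differentiableWithinAt) ?_ ?_
  · rw [deriv_rpow_const']
    exact fun x hx ↦
      ((differentiableAt_rpow_const_of_ne _ (ne_of_gt hx)).const_mul p).differentiableWithinAt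
  · intro x hx
    rw [iter_deriv_rpow_const]
    have hpoch : (descPochhammer ℝ 2).eval p = p * (p - 1) := by
      simp [descPochhammer_succ_right]
    rw [hpoch]
    exact mul_nonneg (mul_nonneg_of_nonpos_of_nonpos hp (by linarith)) (rpow_nonneg hx.le _)

theorem ConvexOn.card_mul_map_sum_div_card_le {ι : Type*} {s : Set ℝ} {f : ℝ → ℝ}
    (hf : ConvexOn ℝ s f) {t : Finset ι} (ht : t.Nonempty) {p : ι → ℝ}
    (hp : ∀ i ∈ t, p i ∈ s) :
    #t * f ((∑ i ∈ t, p i) / #t) ≤ ∑ i ∈ t, f (p i) := by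
  have hcard : (0 : ℝ) < #t := by exact_mod_cast ht.card_pos
  have h := hf.map_sum_le (w := fun _ ↦ (#t : ℝ)⁻¹) (fun _ _ ↦ by positivity)
    (by rw [sum_const, nsmul_eq_mul, mul_inv_cancel₀ hcard.ne']) hp
  simp only [smul_eq_mul, ← mul_sum] at h
  rw [div_eq_inv_mul, ← le_div_iff₀' hcard, div_eq_inv_mul]
  exact h

theorem Finset.sum_offDiag_eq_sum_sum_erase {ι M : Type*} [DecidableEq ι] [AddCommMonoid M]
    (s : Finset ι) (f : ι → ι → M) :
    ∑ q ∈ s.offDiag, f q.1 q.2 = ∑ i ∈ s, ∑ j ∈ s.erase i, f i j :=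
  sum_finset_product _ _ _ fun q ↦ by
    simp only [mem_offDiag, mem_erase]
    tauto

theorem Finset.sum_sum_sub_sq {ι R : Type*} [CommRing R] (s : Finset ι) (x : ι → R) :
    ∑ i ∈ s, ∑ j ∈ s, (x i - x j) ^ 2 = 2 * (#s * ∑ i ∈ s, x i ^ 2 - (∑ i ∈ s, x i) ^ 2) := by
  simp only [sub_sq, sum_add_distrib, sum_sub_distrib, sum_const, nsmul_eq_mul, ← mul_sum,
    ← sum_mul]
  ring

theorem Finset.sum_offDiag_sub_sq {ι R : Type*} [DecidableEq ι] [CommRing R]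
    (s : Finset ι) (x : ι → R) :
    ∑ q ∈ s.offDiag, (x q.1 - x q.2) ^ 2 =
      2 * (#s * ∑ i ∈ s, x i ^ 2 - (∑ i ∈ s, x i) ^ 2) := by
  rw [sum_offDiag_eq_sum_sum_erase (f := fun i j ↦ (x i - x j) ^ 2), ← sum_sum_sub_sq]
  exact sum_congr rfl fun _ _ ↦ sum_erase s (by simp)

theorem abs_rpow_eq_sq_rpow_div_two (a p : ℝ) : |a| ^ p = (a ^ 2) ^ (p / 2) := by
  rw [← sq_abs, ← rpow_natCast, ← rpow_mul (abs_nonneg a), Nat.cast_ofNat,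
    mul_div_cancel₀ p two_ne_zero]

theorem card_offDiag_mul_rpow_mean_sq_le_sum_sum_erase {ι : Type*} [DecidableEq ι] {p : ℝ}
    (hp : p ≤ 0) {s : Finset ι} (hs : s.Nontrivial) {x : ι → ℝ} (hx : Set.InjOn x s) :
    #s.offDiag * ((∑ q ∈ s.offDiag, (x q.1 - x q.2) ^ 2) / #s.offDiag) ^ (p / 2) ≤
      ∑ i ∈ s, ∑ j ∈ s.erase i, |x i - x j| ^ p := by
  obtain ⟨a, ha, b, hb, hab⟩ := hs
  have hpos : ∀ q ∈ s.offDiag, (x q.1 - x q.2) ^ 2 ∈ Set.Ioi 0 := fun q hq ↦ by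
    obtain ⟨hq₁, hq₂, hne⟩ := mem_offDiag.mp hq
    exact sq_pos_of_ne_zero (sub_ne_zero.mpr (hx.ne hq₁ hq₂ hne))
  simp_rw [abs_rpow_eq_sq_rpow_div_two, ← sum_offDiag_eq_sum_sum_erase s fun i j ↦
    ((x i - x j) ^ 2) ^ (p / 2)]
  exact (convexOn_rpow_of_nonpos (by linarith)).card_mul_map_sum_div_card_le
    ⟨(a, b), mem_offDiag.2 ⟨ha, hb, hab⟩⟩ hpos

theorem stmt_2_general (γ h : ℝ) (hγ : γ ∈ Set.Ioo (0 : ℝ) 1) (N : ℕ) (hN : 2 ≤ N)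
    (X : ℕ → ℝ) (hX : ∀ i, 1 ≤ i → i < N → X i < X (i + 1))
    (hsum : ∑ i ∈ Finset.Icc 1 N, X i = 0) :
    (h ^ 2 / (2 * γ)) * ∑ i ∈ Finset.Icc 1 N, ∑ j ∈ (Finset.Icc 1 N).erase i,
        |X i - X j| ^ (-γ) ≥
      (h ^ 2 / γ) * ((N : ℝ) * ((N : ℝ) - 1) / 2) *
        (2 * (∑ i ∈ Finset.Icc 1 N, (X i) ^ 2) / ((N : ℝ) - 1)) ^ (-γ / 2) := by
  obtain ⟨hγ₀, -⟩ := hγ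
  set S := Icc 1 N
  set Q := ∑ i ∈ S, X i ^ 2
  have hinj : Set.InjOn X S := by
    have hmono : StrictMonoOn X (Set.Icc 1 N) :=
      strictMonoOn_of_lt_add_one Set.ordConnected_Icc fun i _ hi hi' ↦
        hX i (Set.mem_Icc.1 hi).1 (Set.mem_Icc.1 hi').2
    simpa [S] using hmono.injOn
  have hS : S.Nontrivial := ⟨1, by simp [S]; omega, 2, by simp [S]; omega, by norm_num⟩
  have hcard : (#S.offDiag : ℝ) = N * (N - 1) := by
    rw [offDiag_card, Nat.card_Icc, Nat.add_sub_cancel, Nat.cast_sub (Nat.le_mul_self N)]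
    push_cast
    ring
  have hsq : ∑ q ∈ S.offDiag, (X q.1 - X q.2) ^ 2 = 2 * N * Q := by
    rw [sum_offDiag_sub_sq, hsum, Nat.card_Icc, Nat.add_sub_cancel]
    ring
  have hbound := card_offDiag_mul_rpow_mean_sq_le_sum_sum_erase (p := -γ) (by linarith) hS hinj
  rw [hcard, hsq] at hbound
  have hmean : 2 * N * Q / (N * (N - 1)) = 2 * Q / (N - 1) := by
    have : (2 : ℝ) ≤ N := by exact_mod_cast hN
    field_simp [show (N : ℝ) - 1 ≠ 0 by linarith]
  calc h ^ 2 / γ * (N * (N - 1) / 2) * (2 * Q / (N - 1)) ^ (-γ / 2)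
      = h ^ 2 / (2 * γ) * (N * (N - 1) * (2 * N * Q / (N * (N - 1))) ^ (-γ / 2)) := by
        rw [hmean]
        ring
    _ ≤ _ := mul_le_mul_of_nonneg_left hbound (by positivity)

theorem stmt_2 (γ h : ℝ) (hγ : γ ∈ Set.Ioo (0 : ℝ) 1) (N : ℕ) (hN : 2 ≤ N) (hh : 0 < h)
    (X : ℕ → ℝ) (hX : ∀ i, 1 ≤ i → i < N → X i < X (i + 1))
    (hsum : ∑ i ∈ Finset.Icc 1 N, X i = 0) :
    (h ^ 2 / (2 * γ)) * ∑ i ∈ Finset.Icc 1 N, ∑ j ∈ (Finset.Icc 1 N).erase i,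
        |X i - X j| ^ (-γ) ≥
      (h ^ 2 / γ) * ((N : ℝ) * ((N : ℝ) - 1) / 2) *
        (2 * (∑ i ∈ Finset.Icc 1 N, (X i) ^ 2) / ((N : ℝ) - 1)) ^ (-γ / 2) :=
  stmt_2_general γ h hγ N hN X hX hsum
end

section
/- Let N ≥ 2, h > 0, and X ∈ R^N strictly increasing with sum X_i = 0, satisfying |X|^2 ≥ (2/N) * sum_{1 ≤ i ≤ j ≤ N-1} (X_{i+1} - X_i)(X_{j+1} - X_j). Then the discrete entropy U[X] = -h * sum_{i=1}^{N-1} log((X_{i+1} - X_i)/h) satisfies U[X] ≥ h(N-1) log h - (h(N-1)/2) log(|X|^2) + (h(N-1)/2) log(N-1). -/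
open Finset Real

/-! With `d i = X (i + 1) - X i` and `D = ∑ d i`, the double sum in the hypothesis is
`(D ^ 2 + ∑ d i ^ 2) / 2`, and Cauchy–Schwarz gives `∑ d i ^ 2 ≥ D ^ 2 / (N - 1)`, so the
hypothesis forces `D ^ 2 ≤ (N - 1) |X| ^ 2`. Jensen's inequality for the concave `log` bounds
`∑ log (d i)` by `(N - 1) log (D / (N - 1))`, which is then at most
`((N - 1) / 2) log (|X| ^ 2 / (N - 1))`. -/

theorem two_mul_sum_Icc_sum_Icc_mul {R : Type*} [CommSemiring R] (f : ℕ → R) (a m : ℕ) :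
    2 * ∑ i ∈ Icc a m, ∑ j ∈ Icc i m, f i * f j =
      (∑ i ∈ Icc a m, f i) ^ 2 + ∑ i ∈ Icc a m, f i ^ 2 := by
  induction m with
  | zero =>
    rcases Nat.eq_zero_or_pos a with rfl | ha
    · simp; ring
    · simp [Icc_eq_empty_of_lt ha]
  | succ m ih =>
    rcases le_or_gt a (m + 1) with ha | ha
    · have inner : ∀ i ∈ Icc a m, ∑ j ∈ Icc i (m + 1), f i * f j =
          ∑ j ∈ Icc i m, f i * f j + f i * f (m + 1) := fun i hi ↦
        sum_Icc_succ_top (by grind) _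
      rw [sum_Icc_succ_top ha, sum_congr rfl inner, sum_add_distrib, ← sum_mul,
        sum_Icc_succ_top ha, sum_Icc_succ_top ha, Icc_self, sum_singleton, mul_add, mul_add, ih]
      ring
    · simp [Icc_eq_empty_of_lt ha]

theorem sq_sum_Icc_le_of_two_mul_sum_Icc_sum_Icc_le (d : ℕ → ℝ) (m : ℕ) (S : ℝ)
    (h : 2 * ∑ i ∈ Icc 1 m, ∑ j ∈ Icc i m, d i * d j ≤ (m + 1) * S) :
    (∑ i ∈ Icc 1 m, d i) ^ 2 ≤ m * S := by
  have cauchy_schwarz := sq_sum_le_card_mul_sum_sq (s := Icc 1 m) (f := d)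
  rw [Nat.card_Icc, Nat.add_sub_cancel] at cauchy_schwarz
  rw [two_mul_sum_Icc_sum_Icc_mul] at h
  have hm : (0 : ℝ) ≤ m := m.cast_nonneg
  nlinarith [mul_le_mul_of_nonneg_left h hm]

theorem sum_log_le_card_mul_log_div_card {ι : Type*} (s : Finset ι) (f : ι → ℝ)
    (hf : ∀ i ∈ s, 0 < f i) : ∑ i ∈ s, log (f i) ≤ #s * log ((∑ i ∈ s, f i) / #s) := by
  rcases s.eq_empty_or_nonempty with rfl | hs
  · simp
  have hcard : (0 : ℝ) < #s := by exact_mod_cast hs.card_pos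
  have jensen := strictConcaveOn_log_Ioi.concaveOn.le_map_sum (t := s) (w := fun _ ↦ (#s : ℝ)⁻¹)
    (p := f) (fun _ _ ↦ by positivity) (by simp [hcard.ne']) hf
  simp only [smul_eq_mul, ← mul_sum] at jensen
  rw [div_eq_inv_mul]
  calc ∑ i ∈ s, log (f i) = #s * ((#s : ℝ)⁻¹ * ∑ i ∈ s, log (f i)) := by field_simp
    _ ≤ #s * log ((#s : ℝ)⁻¹ * ∑ i ∈ s, f i) := by gcongr

theorem two_mul_sum_log_le_of_sq_sum_le {ι : Type*} (s : Finset ι) (f : ι → ℝ) (S : ℝ)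
    (hf : ∀ i ∈ s, 0 < f i) (hS : (∑ i ∈ s, f i) ^ 2 ≤ #s * S) :
    2 * ∑ i ∈ s, log (f i) ≤ #s * (log S - log #s) := by
  rcases s.eq_empty_or_nonempty with rfl | hs
  · simp
  have hcard : (0 : ℝ) < #s := by exact_mod_cast hs.card_pos
  have hmean : 0 < (∑ i ∈ s, f i) / #s := div_pos (sum_pos hf hs) hcard
  have hmean_sq : ((∑ i ∈ s, f i) / #s) ^ 2 ≤ S / #s := by
    rw [div_pow, div_le_div_iff₀ (by positivity) hcard]
    nlinarith
  have hS_pos : 0 < S := by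
    have := (pow_pos hmean 2).trans_le hmean_sq
    rwa [div_pos_iff_of_pos_right hcard] at this
  have hlog := log_le_log (by positivity) hmean_sq
  rw [log_pow, log_div hS_pos.ne' hcard.ne'] at hlog
  have hjensen := sum_log_le_card_mul_log_div_card s f hf
  push_cast at hlog
  linarith [mul_le_mul_of_nonneg_left hlog hcard.le]

theorem stmt_3_general (N : ℕ) (hN : 2 ≤ N) (h : ℝ) (hh : 0 < h) (X : ℕ → ℝ)
    (hX : ∀ i, 1 ≤ i → i < N → X i < X (i + 1))
    (hineq : ∑ i ∈ Finset.Icc 1 N, (X i) ^ 2 ≥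
      (2 / (N : ℝ)) * ∑ i ∈ Finset.Icc 1 (N - 1), ∑ j ∈ Finset.Icc i (N - 1),
        (X (i + 1) - X i) * (X (j + 1) - X j)) :
    -h * ∑ i ∈ Finset.Icc 1 (N - 1), Real.log ((X (i + 1) - X i) / h) ≥
      h * ((N : ℝ) - 1) * Real.log h -
        (h * ((N : ℝ) - 1) / 2) * Real.log (∑ i ∈ Finset.Icc 1 N, (X i) ^ 2) +
        (h * ((N : ℝ) - 1) / 2) * Real.log ((N : ℝ) - 1) := by
  obtain ⟨m, rfl⟩ : ∃ m, N = m + 1 := ⟨N - 1, by omega⟩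
  set S := ∑ i ∈ Icc 1 (m + 1), X i ^ 2
  set d : ℕ → ℝ := fun i ↦ X (i + 1) - X i
  have hd : ∀ i ∈ Icc 1 m, 0 < d i := fun i hi ↦ by
    have := hX i (mem_Icc.1 hi).1 (by grind)
    simp only [d]; linarith
  have hcard : ((#(Icc 1 m) : ℕ) : ℝ) = m := by simp
  push_cast at hineq ⊢
  simp only [add_sub_cancel_right] at hineq ⊢
  have hsq : (∑ i ∈ Icc 1 m, d i) ^ 2 ≤ #(Icc 1 m) * S := by
    rw [hcard]
    refine sq_sum_Icc_le_of_two_mul_sum_Icc_sum_Icc_le d m S ?_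
    rw [ge_iff_le, div_mul_eq_mul_div, div_le_iff₀ (by positivity)] at hineq
    linarith
  have hentropy := two_mul_sum_log_le_of_sq_sum_le _ d S hd hsq
  rw [hcard] at hentropy
  have hsplit : ∑ i ∈ Icc 1 m, log (d i / h) = ∑ i ∈ Icc 1 m, log (d i) - m * log h := by
    rw [sum_congr rfl fun i hi ↦ log_div (hd i hi).ne' hh.ne', sum_sub_distrib, sum_const,
      nsmul_eq_mul, hcard]
  change -h * ∑ i ∈ Icc 1 m, log (d i / h) ≥ _
  rw [hsplit]
  linarith [mul_le_mul_of_nonneg_left hentropy hh.le]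

theorem stmt_3 (N : ℕ) (hN : 2 ≤ N) (h : ℝ) (hh : 0 < h) (X : ℕ → ℝ)
    (hX : ∀ i, 1 ≤ i → i < N → X i < X (i + 1))
    (hsum : ∑ i ∈ Finset.Icc 1 N, X i = 0)
    (hineq : ∑ i ∈ Finset.Icc 1 N, (X i) ^ 2 ≥
      (2 / (N : ℝ)) * ∑ i ∈ Finset.Icc 1 (N - 1), ∑ j ∈ Finset.Icc i (N - 1),
        (X (i + 1) - X i) * (X (j + 1) - X j)) :
    -h * ∑ i ∈ Finset.Icc 1 (N - 1), Real.log ((X (i + 1) - X i) / h) ≥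
      h * ((N : ℝ) - 1) * Real.log h -
        (h * ((N : ℝ) - 1) / 2) * Real.log (∑ i ∈ Finset.Icc 1 N, (X i) ^ 2) +
        (h * ((N : ℝ) - 1) / 2) * Real.log ((N : ℝ) - 1) :=
  stmt_3_general N hN h hh X hX hineq
end

section
/- Let N ≥ 2 and let mu = (mu_1, ..., mu_{N-1}) be positive reals, with the convention mu_0 = mu_N = 0. Then C(mu) := (sum_{i=1}^{N} (mu_i - mu_{i-1})^2)^{-1} * exp((2/(N-1)) * sum_{i=1}^{N-1} log(mu_i)) satisfies C(mu) ≤ 1/(lambda_1 (N-1)), where lambda_1 = 4 sin^2(pi/(2N)). -/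
/-!
The ground-state substitution: if `s > 0` on `1, …, N-1`, then expanding
`(μᵢ - μᵢ₋₁)² - (1 - sᵢ₋₁/sᵢ) μᵢ² - (1 - sᵢ/sᵢ₋₁) μᵢ₋₁² = (sᵢ₋₁ μᵢ - sᵢ μᵢ₋₁)² / (sᵢ₋₁ sᵢ) ≥ 0`
and summing gives `∑ (2 - (sᵢ₋₁ + sᵢ₊₁)/sᵢ) μᵢ² ≤ ∑ (μᵢ - μᵢ₋₁)²`. For the Dirichlet
eigenvector `sₖ = sin (kπ/N)` the coefficient is the constant `λ₁ = 2 - 2 cos (π/N)`, which is the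
discrete Poincaré inequality `λ₁ ∑ μᵢ² ≤ ∑ (μᵢ - μᵢ₋₁)²`. AM-GM bounds the geometric mean of the
`μᵢ²` by their arithmetic mean `(∑ μᵢ²)/(N-1)`, and the two bounds combine to the claim.
-/

open Finset Real

/-- The smallest eigenvalue of the `(N-1) × (N-1)` matrix with `2` on the diagonal and `-1` on the
off-diagonals. -/
noncomputable def lambdaOne (N : ℕ) : ℝ := 4 * sin (π / (2 * N)) ^ 2

lemma lambdaOne_eq (N : ℕ) : lambdaOne N = 2 - 2 * cos (π / N) := by
  rw [lambdaOne, sin_sq_eq_half_sub, show 2 * (π / (2 * N)) = π / N by ring]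
  ring

lemma lambdaOne_pos {N : ℕ} (hN : 0 < N) : 0 < lambdaOne N := by
  have hN' : (1 : ℝ) ≤ N := by exact_mod_cast hN
  have : sin (π / (2 * N)) ≠ 0 := (sin_pos_of_pos_of_lt_pi (by positivity)
    (div_lt_self pi_pos (by linarith))).ne'
  unfold lambdaOne
  positivity

lemma sin_sub_add_sin_add (x θ : ℝ) : sin (x - θ) + sin (x + θ) = 2 * sin x * cos θ := by
  rw [sin_sub, sin_add]
  ring

lemma picone_le {a b u v : ℝ} (hu : 0 ≤ u) (hv : 0 ≤ v) (ha : v = 0 → a = 0)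
    (hb : u = 0 → b = 0) : (1 - u / v) * a ^ 2 + (1 - v / u) * b ^ 2 ≤ (a - b) ^ 2 := by
  -- the degenerate cases `u = 0`, `v = 0` hold because `x / 0 = 0`
  rcases hu.eq_or_lt with rfl | hu
  · simp [hb rfl]
  rcases hv.eq_or_lt with rfl | hv
  · simp [ha rfl]
  have key : (a - b) ^ 2 - ((1 - u / v) * a ^ 2 + (1 - v / u) * b ^ 2)
      = (u * a - v * b) ^ 2 / (u * v) := by
    field_simp
    ring
  have : 0 ≤ (u * a - v * b) ^ 2 / (u * v) := by positivity
  linarith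

theorem sum_mul_sq_le_sum_sq_sub (n : ℕ) (s μ : ℕ → ℝ) (hs : ∀ i ≤ n + 1, 0 ≤ s i)
    (hsμ : ∀ i ≤ n + 1, s i = 0 → μ i = 0) (h0 : μ 0 = 0) (hn : μ (n + 1) = 0) :
    ∑ i ∈ range n, (2 - (s i + s (i + 2)) / s (i + 1)) * μ (i + 1) ^ 2 ≤
      ∑ i ∈ range (n + 1), (μ (i + 1) - μ i) ^ 2 := calc
  _ = ∑ i ∈ range (n + 1), ((1 - s i / s (i + 1)) * μ (i + 1) ^ 2
        + (1 - s (i + 1) / s i) * μ i ^ 2) := by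
    rw [sum_add_distrib, sum_range_succ, sum_range_succ' (fun i ↦ (1 - s (i + 1) / s i) * μ i ^ 2),
      h0, hn]
    simp only [zero_pow two_ne_zero, mul_zero, add_zero]
    rw [← sum_add_distrib]
    refine sum_congr rfl fun i _ ↦ ?_
    ring
  _ ≤ _ := sum_le_sum fun i hi ↦ by
    have hi : i + 1 ≤ n + 1 := by simpa using hi
    exact picone_le (hs i (by omega)) (hs (i + 1) hi) (hsμ _ hi) (hsμ i (by omega))

lemma sum_Icc_one_eq_sum_range (N : ℕ) (f : ℕ → ℝ) :
    ∑ i ∈ Icc 1 N, f i = ∑ i ∈ range N, f (i + 1) := by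
  rw [range_eq_Ico, sum_Ico_add' f, zero_add, Ico_add_one_right_eq_Icc]

lemma sin_nat_mul_pi_div_pos {k N : ℕ} (hk : 0 < k) (hkN : k < N) : 0 < sin (k * (π / N)) := by
  have : (k : ℝ) < N := by exact_mod_cast hkN
  have : (0 : ℝ) < k := by exact_mod_cast hk
  have hN : (0 : ℝ) < N := by linarith
  apply sin_pos_of_pos_of_lt_pi (by positivity)
  rw [← mul_div_assoc, div_lt_iff₀ hN]
  nlinarith [pi_pos]

theorem lambdaOne_mul_sum_sq_le (N : ℕ) (μ : ℕ → ℝ) (h0 : μ 0 = 0) (hN : μ N = 0) :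
    lambdaOne N * ∑ i ∈ Icc 1 (N - 1), μ i ^ 2 ≤ ∑ i ∈ Icc 1 N, (μ i - μ (i - 1)) ^ 2 := by
  obtain _ | n := N
  · simp
  set θ := π / (n + 1 : ℕ)
  set s : ℕ → ℝ := fun k ↦ sin (k * θ)
  have hsN : s (n + 1) = 0 := by
    simp only [s, θ]
    rw [mul_div_cancel₀ _ (by positivity), sin_pi]
  have hs : ∀ i ≤ n + 1, 0 ≤ s i := fun i hi ↦ by
    rcases hi.eq_or_lt with rfl | hi
    · exact hsN.ge
    rcases Nat.eq_zero_or_pos i with rfl | hi0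
    · simp [s]
    exact (sin_nat_mul_pi_div_pos hi0 hi).le
  have hsμ : ∀ i ≤ n + 1, s i = 0 → μ i = 0 := fun i hi hsi ↦ by
    rcases hi.eq_or_lt with rfl | hi
    · exact hN
    rcases Nat.eq_zero_or_pos i with rfl | hi0
    · exact h0
    exact absurd hsi (sin_nat_mul_pi_div_pos hi0 hi).ne'
  have hcoeff : ∀ i ∈ range n, 2 - (s i + s (i + 2)) / s (i + 1) = lambdaOne (n + 1) := by
    intro i hi
    have hpos : 0 < s (i + 1) := sin_nat_mul_pi_div_pos (by omega) (by simp at hi; omega)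
    have hrec : s i + s (i + 2) = 2 * s (i + 1) * cos θ := by
      simp only [s]
      push_cast
      rw [← sin_sub_add_sin_add]
      ring_nf
    rw [hrec, lambdaOne_eq, mul_right_comm, mul_div_cancel_right₀ _ hpos.ne']
  calc lambdaOne (n + 1) * ∑ i ∈ Icc 1 n, μ i ^ 2
      = ∑ i ∈ range n, (2 - (s i + s (i + 2)) / s (i + 1)) * μ (i + 1) ^ 2 := by
        rw [sum_Icc_one_eq_sum_range, mul_sum]
        exact sum_congr rfl fun i hi ↦ by rw [hcoeff i hi]
    _ ≤ ∑ i ∈ range (n + 1), (μ (i + 1) - μ i) ^ 2 := sum_mul_sq_le_sum_sq_sub n s μ hs hsμ h0 hN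
    _ = ∑ i ∈ Icc 1 (n + 1), (μ i - μ (i - 1)) ^ 2 := by simp [sum_Icc_one_eq_sum_range]

lemma exp_mean_log_le_mean {ι : Type*} {t : Finset ι} (ht : t.Nonempty) {x : ι → ℝ}
    (hx : ∀ i ∈ t, 0 < x i) : exp ((∑ i ∈ t, log (x i)) / #t) ≤ (∑ i ∈ t, x i) / #t := by
  have hjensen := strictConcaveOn_log_Ioi.concaveOn.le_map_sum (t := t) (w := fun _ ↦ (#t : ℝ)⁻¹)
    (p := x) (fun _ _ ↦ by positivity) (by simp [ht.card_ne_zero]) hx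
  simp only [smul_eq_mul, ← mul_sum] at hjensen
  have hmean : 0 < (#t : ℝ)⁻¹ * ∑ i ∈ t, x i :=
    mul_pos (by simp [ht.card_pos]) (sum_pos hx ht)
  rw [div_eq_inv_mul, div_eq_inv_mul, ← exp_log hmean]
  exact exp_le_exp.mpr hjensen

theorem stmt_6 (N : ℕ) (hN : 2 ≤ N) (μ : ℕ → ℝ)
    (hpos : ∀ i, 1 ≤ i → i ≤ N - 1 → 0 < μ i)
    (h0 : μ 0 = 0) (hNz : μ N = 0) :
    (∑ i ∈ Finset.Icc 1 N, (μ i - μ (i - 1)) ^ 2)⁻¹ *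
        Real.exp ((2 / ((N : ℝ) - 1)) * ∑ i ∈ Finset.Icc 1 (N - 1), Real.log (μ i)) ≤
      1 / (4 * Real.sin (Real.pi / (2 * N)) ^ 2 * ((N : ℝ) - 1)) := by
  set t := Icc 1 (N - 1)
  set Q := ∑ i ∈ t, μ i ^ 2
  set S := ∑ i ∈ Icc 1 N, (μ i - μ (i - 1)) ^ 2
  have ht : t.Nonempty := nonempty_Icc.mpr (by omega)
  have hμ : ∀ i ∈ t, 0 < μ i := fun i hi ↦ hpos i (mem_Icc.mp hi).1 (mem_Icc.mp hi).2
  have hcard : (#t : ℝ) = N - 1 := by simp [t, Nat.cast_sub (by omega : 1 ≤ N)]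
  have hm : (0 : ℝ) < N - 1 := hcard ▸ Nat.cast_pos.mpr ht.card_pos
  have hlam := lambdaOne_pos (by omega : 0 < N)
  have hpoincare : lambdaOne N * Q ≤ S := lambdaOne_mul_sum_sq_le N μ h0 hNz
  have hS : 0 < S := (mul_pos hlam (sum_pos (fun i hi ↦ pow_pos (hμ i hi) 2) ht)).trans_le hpoincare
  have hamgm : exp ((2 / ((N : ℝ) - 1)) * ∑ i ∈ t, log (μ i)) ≤ Q / (N - 1) := by
    have := exp_mean_log_le_mean ht (fun i hi ↦ pow_pos (hμ i hi) 2)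
    rwa [hcard, sum_congr rfl fun i _ ↦ log_pow (μ i) 2, ← mul_sum, mul_div_right_comm,
      Nat.cast_ofNat] at this
  calc S⁻¹ * exp ((2 / ((N : ℝ) - 1)) * ∑ i ∈ t, log (μ i))
      ≤ S⁻¹ * (Q / (N - 1)) := by gcongr
    _ ≤ 1 / (lambdaOne N * (N - 1)) := by
      rw [inv_mul_eq_div, div_div, div_le_div_iff₀ (by positivity) (by positivity)]
      nlinarith
end

section
/- Let gamma ∈ (0,1) and let rho be a nonnegative integrable function on R with total mass M = ∫ rho dx > 0 and finite second moment I = ∫ x^2 rho(x) dx, and zero center of mass. Then the interaction energy satisfies ∫∫ rho(x) |x - y|^{-gamma} rho(y) dx dy ≥ 2^{-gamma/2} M^{2 + gamma/2} I^{-gamma/2}. -/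
/-! Since `z ↦ z ^ (-γ/2)` is convex on `(0, ∞)`, it lies above its tangent line at
`z₀ = 2I/M`. Applying this to `z = |x - y|²` and integrating against `ρ(x) ρ(y)`, where
`∫∫ |x - y|² ρ(x) ρ(y) = 2MI` because the centre of mass is zero, the choice of `z₀` makes the
slope term cancel and leaves `M² z₀ ^ (-γ/2)`: this is Jensen's inequality for the probability
measure `ρ ⊗ ρ / M²`. -/

open MeasureTheory Real

lemma one_add_le_rpow_neg_add_mul {p u : ℝ} (hp : 0 < p) (hu : 0 < u) :
    1 + p ≤ u ^ (-p) + p * u := by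
  have h1p : 0 < 1 + p := by linarith
  have amgm := geom_mean_le_arith_mean2_weighted (w₁ := 1 / (1 + p)) (w₂ := p / (1 + p))
    (by positivity) (by positivity) (rpow_nonneg hu.le (-p)) hu.le (by field_simp)
  have geom : (u ^ (-p)) ^ (1 / (1 + p)) * u ^ (p / (1 + p)) = 1 := by
    rw [← rpow_mul hu.le, ← rpow_add hu, show -p * (1 / (1 + p)) + p / (1 + p) = 0 by ring,
      rpow_zero]
  rw [geom, ← mul_le_mul_iff_right₀ h1p] at amgm
  field_simp at amgm
  linarith

lemma rpow_neg_tangent_le {p z z₀ : ℝ} (hp : 0 < p) (hz : 0 < z) (hz₀ : 0 < z₀) :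
    z₀ ^ (-p) * (1 + p - p * z / z₀) ≤ z ^ (-p) := by
  have hu : 0 < z / z₀ := div_pos hz hz₀
  have hscale : z ^ (-p) = z₀ ^ (-p) * (z / z₀) ^ (-p) := by
    rw [← mul_rpow hz₀.le hu.le, mul_div_cancel₀ _ hz₀.ne']
  rw [hscale, mul_div_assoc]
  gcongr
  linarith [one_add_le_rpow_neg_add_mul hp hu]

lemma tangent_le_abs_sub_rpow_neg {γ z₀ x y : ℝ} (hγ : 0 < γ) (hz₀ : 0 < z₀) (hxy : x ≠ y) :
    (1 + γ / 2) * z₀ ^ (-(γ / 2)) - γ / 2 * z₀ ^ (-(γ / 2)) / z₀ * (x - y) ^ 2 ≤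
      |x - y| ^ (-γ) := by
  have hsq : ((x - y) ^ 2) ^ (-(γ / 2)) = |x - y| ^ (-γ) := by
    rw [← sq_abs, ← rpow_natCast, ← rpow_mul (abs_nonneg _)]
    congr 1
    ring
  have hz : 0 < (x - y) ^ 2 := pow_pos (abs_pos.2 (sub_ne_zero.2 hxy)) 2 |>.trans_eq (sq_abs _)
  rw [← hsq]
  convert rpow_neg_tangent_le (half_pos hγ) hz hz₀ using 1
  ring

lemma ofReal_integral_le_lintegral_ofReal {α : Type*} [MeasurableSpace α] {μ : Measure α}
    {f : α → ℝ} (hf : Integrable f μ) :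
    ENNReal.ofReal (∫ a, f a ∂μ) ≤ ∫⁻ a, ENNReal.ofReal (f a) ∂μ := by
  refine le_trans (ENNReal.ofReal_le_ofReal ?_) ENNReal.ofReal_toReal_le
  rw [integral_eq_lintegral_pos_part_sub_lintegral_neg_part hf]
  exact sub_le_self _ ENNReal.toReal_nonneg

lemma ofReal_integral_le_lintegral_add {α : Type*} [MeasurableSpace α] {μ : Measure α}
    {f g : α → ℝ} {F : α → ENNReal} (hf : Integrable f μ) (hg : Integrable g μ)
    (hg_nonneg : 0 ≤ᵐ[μ] g) (hle : ∀ᵐ a ∂μ, ENNReal.ofReal (f a) ≤ F a + ENNReal.ofReal (g a)) :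
    ENNReal.ofReal (∫ a, f a ∂μ) ≤ ∫⁻ a, F a ∂μ + ENNReal.ofReal (∫ a, g a ∂μ) :=
  calc ENNReal.ofReal (∫ a, f a ∂μ)
      ≤ ∫⁻ a, ENNReal.ofReal (f a) ∂μ := ofReal_integral_le_lintegral_ofReal hf
    _ ≤ ∫⁻ a, (F a + ENNReal.ofReal (g a)) ∂μ := lintegral_mono_ae hle
    _ = ∫⁻ a, F a ∂μ + ENNReal.ofReal (∫ a, g a ∂μ) := by
      rw [lintegral_add_right' _ hg.aemeasurable.ennreal_ofReal,
        ofReal_integral_eq_lintegral_ofReal hg hg_nonneg]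

lemma sub_sq_mul_expand (x y a : ℝ) :
    (x - y) ^ 2 * a = x ^ 2 * a + (-2 * x) * (y * a) + y ^ 2 * a := by ring

lemma integrable_sub_sq_mul {ρ : ℝ → ℝ} (h₀ : Integrable ρ) (h₁ : Integrable fun y ↦ y * ρ y)
    (h₂ : Integrable fun y ↦ y ^ 2 * ρ y) (x : ℝ) : Integrable fun y ↦ (x - y) ^ 2 * ρ y := by
  simp_rw [sub_sq_mul_expand x]
  fun_prop

lemma integral_sub_sq_mul {ρ : ℝ → ℝ} (h₀ : Integrable ρ) (h₁ : Integrable fun y ↦ y * ρ y)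
    (h₂ : Integrable fun y ↦ y ^ 2 * ρ y) (x : ℝ) :
    ∫ y, (x - y) ^ 2 * ρ y =
      x ^ 2 * (∫ y, ρ y) - 2 * x * (∫ y, y * ρ y) + ∫ y, y ^ 2 * ρ y := by
  simp_rw [sub_sq_mul_expand x]
  rw [integral_add (by fun_prop) h₂, integral_add (by fun_prop) (by fun_prop),
    integral_const_mul, integral_const_mul]
  ring

lemma integral_sq_mul_pos {ρ : ℝ → ℝ} (hρ : ∀ x, 0 ≤ ρ x) (h₂ : Integrable fun x ↦ x ^ 2 * ρ x)
    (hM : 0 < ∫ x, ρ x) : 0 < ∫ x, x ^ 2 * ρ x := by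
  refine (integral_nonneg fun x ↦ mul_nonneg (sq_nonneg x) (hρ x)).lt_of_ne' fun hI ↦ hM.ne' ?_
  have hzero : (fun x ↦ x ^ 2 * ρ x) =ᵐ[volume] 0 :=
    (integral_eq_zero_iff_of_nonneg (fun x ↦ mul_nonneg (sq_nonneg x) (hρ x)) h₂).1 hI
  refine integral_eq_zero_of_ae ?_
  filter_upwards [hzero, volume.ae_ne 0] with x hx hx0
  simpa [hx0] using hx

theorem ofReal_sub_le_lintegral_interaction {ρ : ℝ → ℝ} {K : ℝ → ℝ → ℝ} {A B : ℝ}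
    (hB : 0 ≤ B) (hρ : ∀ x, 0 ≤ ρ x) (h₀ : Integrable ρ) (h₁ : Integrable fun x ↦ x * ρ x)
    (h₂ : Integrable fun x ↦ x ^ 2 * ρ x) (hK : ∀ x, ∀ᵐ y, A - B * (x - y) ^ 2 ≤ K x y) :
    ENNReal.ofReal (A * (∫ x, ρ x) ^ 2 -
        2 * B * ((∫ x, ρ x) * (∫ x, x ^ 2 * ρ x) - (∫ x, x * ρ x) ^ 2)) ≤
      ∫⁻ x, ∫⁻ y, ENNReal.ofReal (ρ x * K x y * ρ y) := by
  set M := ∫ x, ρ x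
  set I := ∫ x, x ^ 2 * ρ x
  set m := ∫ x, x * ρ x
  set S := fun x ↦ ∫ y, (x - y) ^ 2 * ρ y
  have hS_nonneg (x : ℝ) : 0 ≤ S x := integral_nonneg fun y ↦ mul_nonneg (sq_nonneg _) (hρ y)
  have inner (x : ℝ) : ENNReal.ofReal (A * ρ x * M) ≤
      (∫⁻ y, ENNReal.ofReal (ρ x * K x y * ρ y)) + ENNReal.ofReal (B * ρ x * S x) := by
    have key := ofReal_integral_le_lintegral_add (f := fun y ↦ A * ρ x * ρ y)
      (g := fun y ↦ B * ρ x * ((x - y) ^ 2 * ρ y))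
      (F := fun y ↦ ENNReal.ofReal (ρ x * K x y * ρ y)) (h₀.const_mul _)
      ((integrable_sub_sq_mul h₀ h₁ h₂ x).const_mul _)
      (ae_of_all _ fun y ↦ by have := hρ x; have := hρ y; positivity) (by
        filter_upwards [hK x] with y hy
        refine (ENNReal.ofReal_le_ofReal ?_).trans ENNReal.ofReal_add_le
        nlinarith [mul_le_mul_of_nonneg_right hy (mul_nonneg (hρ x) (hρ y))])
    rw [integral_const_mul, integral_const_mul] at key
    exact key
  have hρS (x : ℝ) :
      B * ρ x * S x = B * M * (x ^ 2 * ρ x) + (-2 * B * m) * (x * ρ x) + B * I * ρ x := by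
    simp only [S, integral_sub_sq_mul h₀ h₁ h₂]
    ring
  have outer := ofReal_integral_le_lintegral_add (f := fun x ↦ A * ρ x * M)
    (g := fun x ↦ B * ρ x * S x) (F := fun x ↦ ∫⁻ y, ENNReal.ofReal (ρ x * K x y * ρ y))
    (h₀.const_mul A |>.mul_const M) (by simp_rw [hρS]; fun_prop)
    (ae_of_all _ fun x ↦ mul_nonneg (mul_nonneg hB (hρ x)) (hS_nonneg x)) (ae_of_all _ inner)
  have hf_int : ∫ x, A * ρ x * M = A * M ^ 2 := by
    rw [integral_mul_const, integral_const_mul]; ring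
  have hg_int : ∫ x, B * ρ x * S x = 2 * B * (M * I - m ^ 2) := by
    simp_rw [hρS]
    rw [integral_add (by fun_prop) (by fun_prop), integral_add (by fun_prop) (by fun_prop),
      integral_const_mul, integral_const_mul, integral_const_mul]
    ring
  rw [hf_int, hg_int] at outer
  rw [ENNReal.ofReal_sub _ <| hg_int ▸
    integral_nonneg fun x ↦ mul_nonneg (mul_nonneg hB (hρ x)) (hS_nonneg x)]
  exact tsub_le_iff_right.2 outer

theorem stmt_9 (γ : ℝ) (hγ : γ ∈ Set.Ioo (0 : ℝ) 1) (ρ : ℝ → ℝ)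
    (hρ : ∀ x, 0 ≤ ρ x) (hint : Integrable ρ)
    (M : ℝ) (hM : ∫ x, ρ x = M) (hMpos : 0 < M)
    (hxint : Integrable (fun x => x * ρ x)) (hc : ∫ x, x * ρ x = 0)
    (I : ℝ) (hI2 : Integrable (fun x => x ^ 2 * ρ x)) (hI : ∫ x, x ^ 2 * ρ x = I) :
    ENNReal.ofReal ((2 : ℝ) ^ (-γ / 2) * M ^ (2 + γ / 2) * I ^ (-γ / 2)) ≤
      ∫⁻ x, ∫⁻ y, ENNReal.ofReal (ρ x * |x - y| ^ (-γ) * ρ y) := by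
  have hIpos : 0 < I := hI ▸ integral_sq_mul_pos hρ hI2 (hM ▸ hMpos)
  set p := γ / 2 with hp_def
  have hp : 0 < p := half_pos hγ.1
  set z₀ := 2 * I / M
  have hz₀ : 0 < z₀ := by positivity
  have hK (x : ℝ) : ∀ᵐ y, (1 + p) * z₀ ^ (-p) - p * z₀ ^ (-p) / z₀ * (x - y) ^ 2 ≤
      |x - y| ^ (-γ) :=
    (volume.ae_ne x).mono fun _ hy ↦ tangent_le_abs_sub_rpow_neg hγ.1 hz₀ hy.symm
  have key := ofReal_sub_le_lintegral_interaction (by positivity) hρ hint hxint hI2 hK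
  rw [hM, hI, hc] at key
  convert key using 2
  have hpow : z₀ ^ (-p) = 2 ^ (-p) * I ^ (-p) * M ^ p := by
    rw [div_rpow (by positivity) hMpos.le, mul_rpow zero_le_two hIpos.le, rpow_neg hMpos.le,
      div_inv_eq_mul]
  have hM2p : M ^ (2 + p) = M ^ 2 * M ^ p := by
    rw [rpow_add hMpos, rpow_two]
  rw [neg_div, ← hp_def, hM2p, hpow]
  simp only [z₀]
  field_simp
  ring
end

section
/- Let gamma ∈ (0,1) and Y_1, Y_2 > 0. Then 1/(Y_2^{gamma+1}(Y_1+Y_2)^{gamma+1}) + 1/(Y_1^{gamma+1}(Y_1+Y_2)^{gamma+1}) - 1/(Y_1^gamma Y_2^{gamma+2}) - 1/(Y_2^gamma Y_1^{gamma+2}) ≤ -(1/(Y_1 Y_2)^gamma) * (1/Y_1 - 1/Y_2)^2. -/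
open Real

theorem stmt_13 (γ Y₁ Y₂ : ℝ) (hγ : γ ∈ Set.Ioo (0 : ℝ) 1) (hY₁ : 0 < Y₁) (hY₂ : 0 < Y₂) :
    1 / (Y₂ ^ (γ + 1) * (Y₁ + Y₂) ^ (γ + 1)) + 1 / (Y₁ ^ (γ + 1) * (Y₁ + Y₂) ^ (γ + 1)) -
        1 / (Y₁ ^ γ * Y₂ ^ (γ + 2)) - 1 / (Y₂ ^ γ * Y₁ ^ (γ + 2)) ≤
      -(1 / (Y₁ * Y₂) ^ γ) * (1 / Y₁ - 1 / Y₂) ^ 2 := by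
  obtain ⟨hγ0, hγ1⟩ := hγ
  have hS : 0 < Y₁ + Y₂ := by linarith
  have hA : 0 < Y₁ ^ γ := rpow_pos_of_pos hY₁ γ
  have hB : 0 < Y₂ ^ γ := rpow_pos_of_pos hY₂ γ
  have hSg : 0 < (Y₁ + Y₂) ^ γ := rpow_pos_of_pos hS γ
  have e1 : Y₁ ^ (γ + 1) = Y₁ ^ γ * Y₁ := by rw [rpow_add hY₁, rpow_one]
  have e2 : Y₂ ^ (γ + 1) = Y₂ ^ γ * Y₂ := by rw [rpow_add hY₂, rpow_one]
  have e3 : (Y₁ + Y₂) ^ (γ + 1) = (Y₁ + Y₂) ^ γ * (Y₁ + Y₂) := by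
    rw [rpow_add hS, rpow_one]
  have e4 : Y₁ ^ (γ + 2) = Y₁ ^ γ * (Y₁ * Y₁) := by
    rw [rpow_add hY₁, show (2 : ℝ) = ((2 : ℕ) : ℝ) by norm_num, rpow_natCast]; ring
  have e5 : Y₂ ^ (γ + 2) = Y₂ ^ γ * (Y₂ * Y₂) := by
    rw [rpow_add hY₂, show (2 : ℝ) = ((2 : ℕ) : ℝ) by norm_num, rpow_natCast]; ring
  have e6 : (Y₁ * Y₂) ^ γ = Y₁ ^ γ * Y₂ ^ γ := mul_rpow hY₁.le hY₂.le
  rw [e1, e2, e3, e4, e5, e6]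
  have hb1 : Y₁ ^ γ * Y₁ ≤ (Y₁ + Y₂) ^ γ * (Y₁ + Y₂) :=
    mul_le_mul (rpow_le_rpow hY₁.le (by linarith) hγ0.le) (by linarith) hY₁.le hSg.le
  have hb2 : Y₂ ^ γ * Y₂ ≤ (Y₁ + Y₂) ^ γ * (Y₁ + Y₂) :=
    mul_le_mul (rpow_le_rpow hY₂.le (by linarith) hγ0.le) (by linarith) hY₂.le hSg.le
  have h1 : 1 / (Y₂ ^ γ * Y₂ * ((Y₁ + Y₂) ^ γ * (Y₁ + Y₂))) ≤
      1 / (Y₁ ^ γ * Y₁ * (Y₂ ^ γ * Y₂)) := by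
    rw [div_le_div_iff₀ (by positivity) (by positivity)]
    nlinarith [mul_pos hB hY₂, mul_pos hA hY₁]
  have h2 : 1 / (Y₁ ^ γ * Y₁ * ((Y₁ + Y₂) ^ γ * (Y₁ + Y₂))) ≤
      1 / (Y₁ ^ γ * Y₁ * (Y₂ ^ γ * Y₂)) := by
    rw [div_le_div_iff₀ (by positivity) (by positivity)]
    nlinarith [mul_pos hB hY₂, mul_pos hA hY₁]
  have hid : -(1 / (Y₁ ^ γ * (Y₂ ^ γ * (Y₂ * Y₂)))) - 1 / (Y₂ ^ γ * (Y₁ ^ γ * (Y₁ * Y₁)))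
      + 2 / (Y₁ ^ γ * Y₁ * (Y₂ ^ γ * Y₂))
      = -(1 / (Y₁ ^ γ * Y₂ ^ γ)) * (1 / Y₁ - 1 / Y₂) ^ 2 := by
    field_simp
    ring
  ring_nf at h1 h2 hid ⊢
  linarith [h1, h2, hid]
end

section
/- Let gamma ∈ (0,1) and N ≥ 4. For Y_0 = +∞ (i.e., terms with Y_0 omitted), Y_N = +∞ and Y_1, ..., Y_{N-1} > 0, define J^1(Y) = sum over i of (Y_i^{-(gamma+1)} - Y_{i-1}^{-(gamma+1)})^2 with the boundary convention that infinite gaps contribute 0, and let J^2(Y) = sum_{i} sum_{|j-i| ≥ 2} sgn(X_j - X_i)|X_j - X_i|^{-(gamma+1)} (Y_i^{-(gamma+1)} - Y_{i-1}^{-(gamma+1)}) where X is any strictly increasing tuple with gaps Y_i = X_{i+1} - X_i. Then J^2(Y) ≤ 2(N-2)^2 J^1(Y). -/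
/-!
Write `a i = g i - g (i - 1)` and `T = ∑ i, |a i|`. Since `g` vanishes at `0` and at `N`,
telescoping from either end gives `2 |g i| ≤ T`. For `|j - i| ≥ 2` the distance `|X j - X i|`
dominates the gap of `X` adjacent to `i` on the side of `j`, so the kernel
`|X j - X i| ^ (-(γ + 1))` is at most `g i` or `g (i - 1)`, hence at most `T / 2`. Each `i` has
at most `N - 2` partners `j`, so the double sum is at most `(N - 2) T² / 2`, and Cauchy–Schwarz
`T² ≤ N ∑ i, a i ^ 2` finishes.
-/

open Finset Real

lemma Real.abs_sign_le_one (r : ℝ) : |Real.sign r| ≤ 1 := by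
  rcases Real.sign_apply_eq r with h | h | h <;> simp [h]

lemma Finset.sum_Ioc_sub_pred {M : Type*} [AddCommGroup M] (g : ℕ → M) {m n : ℕ} (h : m ≤ n) :
    ∑ k ∈ Ioc m n, (g k - g (k - 1)) = g n - g m := by
  induction n, h using Nat.le_induction with
  | base => simp
  | succ n h ih =>
    rw [sum_Ioc_succ_top (by omega), ih, Nat.add_sub_cancel]
    abel

lemma two_mul_abs_le_sum_abs_sub_pred {g : ℕ → ℝ} {N i : ℕ} (h0 : g 0 = 0) (hN : g N = 0)
    (hi : i ≤ N) : 2 * |g i| ≤ ∑ k ∈ Icc 1 N, |g k - g (k - 1)| := by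
  have hleft := abs_sum_le_sum_abs (fun k ↦ g k - g (k - 1)) (Ioc 0 i)
  have hright := abs_sum_le_sum_abs (fun k ↦ g k - g (k - 1)) (Ioc i N)
  rw [sum_Ioc_sub_pred g (Nat.zero_le i), h0, sub_zero] at hleft
  rw [sum_Ioc_sub_pred g hi, hN, zero_sub, abs_neg] at hright
  rw [show Icc 1 N = Ioc 0 N from Icc_add_one_left_eq_Ioc 0 N,
    ← sum_Ioc_consecutive (fun k ↦ |g k - g (k - 1)|) (Nat.zero_le i) hi]
  linarith

lemma card_filter_far_le {N i : ℕ} (hi : i ∈ Icc 1 N) :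
    #{j ∈ Icc 1 N | i + 2 ≤ j ∨ j + 2 ≤ i} ≤ N - 2 := by
  rw [mem_Icc] at hi
  have hsub : {j ∈ Icc 1 N | i + 2 ≤ j ∨ j + 2 ≤ i} ⊆ Icc 1 (i - 2) ∪ Icc (i + 2) N := by
    intro j hj
    simp only [mem_filter, mem_union, mem_Icc] at hj ⊢
    omega
  have := (card_le_card hsub).trans (card_union_le _ _)
  simp only [Nat.card_Icc] at this
  omega

lemma sum_sum_ite_far_le {N : ℕ} (hN : 2 ≤ N) {f : ℕ → ℕ → ℝ} {c : ℕ → ℝ}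
    (hc : ∀ i ∈ Icc 1 N, 0 ≤ c i)
    (hf : ∀ i ∈ Icc 1 N, ∀ j ∈ Icc 1 N, (i + 2 ≤ j ∨ j + 2 ≤ i) → f i j ≤ c i) :
    ∑ i ∈ Icc 1 N, ∑ j ∈ Icc 1 N, (if i + 2 ≤ j ∨ j + 2 ≤ i then f i j else 0) ≤
      ((N : ℝ) - 2) * ∑ i ∈ Icc 1 N, c i := by
  rw [mul_sum]
  refine sum_le_sum fun i hi ↦ ?_
  have hcard : (#{j ∈ Icc 1 N | i + 2 ≤ j ∨ j + 2 ≤ i} : ℝ) ≤ (N : ℝ) - 2 := by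
    have hcast : ((N - 2 : ℕ) : ℝ) = N - 2 := by rw [Nat.cast_sub hN, Nat.cast_ofNat]
    exact hcast ▸ Nat.cast_le.2 (card_filter_far_le hi)
  rw [← sum_filter]
  calc ∑ j ∈ Icc 1 N with i + 2 ≤ j ∨ j + 2 ≤ i, f i j
      ≤ #{j ∈ Icc 1 N | i + 2 ≤ j ∨ j + 2 ≤ i} • c i :=
        sum_le_card_nsmul _ _ _ fun j hj ↦ hf i hi j (mem_filter.1 hj).1 (mem_filter.1 hj).2
    _ ≤ ((N : ℝ) - 2) * c i := by
        rw [nsmul_eq_mul]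
        exact mul_le_mul_of_nonneg_right hcard (hc i hi)

section Gaps

variable {X : ℕ → ℝ} {s : ℝ} {p q : ℕ}

lemma rpow_sub_le_rpow_first_gap (hs : s ≤ 0) (hX : MonotoneOn X (Set.Icc p q))
    (hp : X p < X (p + 1)) (hpq : p < q) : (X q - X p) ^ s ≤ (X (p + 1) - X p) ^ s :=
  rpow_le_rpow_of_nonpos (sub_pos.2 hp)
    (sub_le_sub_right (hX ⟨by omega, hpq⟩ ⟨hpq.le, le_rfl⟩ hpq) _) hs

lemma rpow_sub_le_rpow_last_gap (hs : s ≤ 0) (hX : MonotoneOn X (Set.Icc p q))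
    (hq : X (q - 1) < X q) (hpq : p < q) : (X q - X p) ^ s ≤ (X q - X (q - 1)) ^ s :=
  rpow_le_rpow_of_nonpos (sub_pos.2 hq)
    (sub_le_sub_left (hX ⟨le_rfl, hpq.le⟩ ⟨by omega, by omega⟩ (by omega)) _) hs

lemma rpow_abs_sub_le_of_far (hs : s ≤ 0) {N : ℕ} {g : ℕ → ℝ}
    (hX : StrictMonoOn X (Set.Icc 1 N))
    (hg : ∀ k, 1 ≤ k → k < N → g k = (X (k + 1) - X k) ^ s)
    {i j : ℕ} (hi : i ∈ Icc 1 N) (hj : j ∈ Icc 1 N) (hfar : i + 2 ≤ j ∨ j + 2 ≤ i) :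
    |X j - X i| ^ s ≤ g i ∨ |X j - X i| ^ s ≤ g (i - 1) := by
  rw [mem_Icc] at hi hj
  have hmono := hX.monotoneOn
  rcases hfar with h | h
  · left
    rw [abs_of_nonneg (sub_nonneg.2 (hmono ⟨hi.1, by omega⟩ hj (by omega))),
      hg i hi.1 (by omega)]
    exact rpow_sub_le_rpow_first_gap hs (hmono.mono (Set.Icc_subset_Icc hi.1 hj.2))
      (hX ⟨hi.1, by omega⟩ ⟨by omega, by omega⟩ (lt_add_one i)) (by omega)
  · right
    rw [abs_sub_comm, abs_of_nonneg (sub_nonneg.2 (hmono ⟨hj.1, by omega⟩ hi (by omega))),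
      hg (i - 1) (by omega) (by omega), Nat.sub_add_cancel (by omega)]
    exact rpow_sub_le_rpow_last_gap hs (hmono.mono (Set.Icc_subset_Icc hj.1 hi.2))
      (hX ⟨by omega, by omega⟩ hi (by omega)) (by omega)

end Gaps

lemma sign_mul_abs_rpow_mul_le {x s c : ℝ} (hc : |x| ^ s ≤ c) (a : ℝ) :
    Real.sign x * |x| ^ s * a ≤ c * |a| :=
  calc _ ≤ |Real.sign x * |x| ^ s * a| := le_abs_self _
    _ = |Real.sign x| * |x| ^ s * |a| := by
        rw [abs_mul, abs_mul, abs_of_nonneg (rpow_nonneg (abs_nonneg x) s)]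
    _ ≤ 1 * c * |a| := by gcongr; exact Real.abs_sign_le_one x
    _ = c * |a| := by rw [one_mul]

lemma sub_two_div_two_mul_sq_sum_abs_le {N : ℕ} (hN : 3 ≤ N) (a : ℕ → ℝ) :
    ((N : ℝ) - 2) / 2 * (∑ i ∈ Icc 1 N, |a i|) ^ 2 ≤
      2 * ((N : ℝ) - 2) ^ 2 * ∑ i ∈ Icc 1 N, a i ^ 2 := by
  have hCS : (∑ i ∈ Icc 1 N, |a i|) ^ 2 ≤ N * ∑ i ∈ Icc 1 N, a i ^ 2 := by
    simpa only [sq_abs, Nat.card_Icc, add_tsub_cancel_right] using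
      sq_sum_le_card_mul_sum_sq (s := Icc 1 N) (f := fun i ↦ |a i|)
  have hS : 0 ≤ ∑ i ∈ Icc 1 N, a i ^ 2 := sum_nonneg fun i _ ↦ sq_nonneg _
  have hN' : (3 : ℝ) ≤ N := by exact_mod_cast hN
  calc _ ≤ ((N : ℝ) - 2) / 2 * (N * ∑ i ∈ Icc 1 N, a i ^ 2) := by gcongr; linarith
    _ ≤ _ := by nlinarith [mul_nonneg (mul_nonneg (by linarith : (0 : ℝ) ≤ N - 2)
          (by linarith : (0 : ℝ) ≤ 3 * N - 8)) hS]

theorem stmt_19 (γ : ℝ) (hγ : γ ∈ Set.Ioo (0 : ℝ) 1) (N : ℕ) (hN : 4 ≤ N)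
    (X Y g : ℕ → ℝ)
    (hX : ∀ i, 1 ≤ i → i < N → X i < X (i + 1))
    (hY : ∀ i, Y i = X (i + 1) - X i)
    (hg : ∀ i, g i = if 1 ≤ i ∧ i ≤ N - 1 then (Y i) ^ (-(γ + 1)) else 0) :
    ∑ i ∈ Finset.Icc 1 N, ∑ j ∈ Finset.Icc 1 N,
        (if i + 2 ≤ j ∨ j + 2 ≤ i then
          Real.sign (X j - X i) * |X j - X i| ^ (-(γ + 1)) * (g i - g (i - 1))
        else 0) ≤
      2 * ((N : ℝ) - 2) ^ 2 * ∑ i ∈ Finset.Icc 1 N, (g i - g (i - 1)) ^ 2 := by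
  have hs : -(γ + 1) ≤ 0 := by linarith [hγ.1]
  set T := ∑ k ∈ Icc 1 N, |g k - g (k - 1)| with hT
  have hXmono : StrictMonoOn X (Set.Icc 1 N) :=
    strictMonoOn_of_lt_add_one Set.ordConnected_Icc fun k _ hk hk1 ↦ hX k hk.1 hk1.2
  have hg_gap : ∀ k, 1 ≤ k → k < N → g k = (X (k + 1) - X k) ^ (-(γ + 1)) :=
    fun k h1 h2 ↦ by rw [hg, if_pos ⟨h1, by omega⟩, hY]
  have hg_le : ∀ k ≤ N, g k ≤ T / 2 := fun k hk ↦ by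
    have := two_mul_abs_le_sum_abs_sub_pred (g := g) (by rw [hg, if_neg (by omega)])
      (by rw [hg, if_neg (by omega)]) hk
    linarith [le_abs_self (g k)]
  have hkernel : ∀ i ∈ Icc 1 N, ∀ j ∈ Icc 1 N, (i + 2 ≤ j ∨ j + 2 ≤ i) →
      |X j - X i| ^ (-(γ + 1)) ≤ T / 2 := by
    intro i hi j hj hfar
    rcases rpow_abs_sub_le_of_far hs hXmono hg_gap hi hj hfar with h | h
    exacts [h.trans (hg_le i (mem_Icc.1 hi).2),
      h.trans (hg_le _ ((i.sub_le 1).trans (mem_Icc.1 hi).2))]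
  have hT0 : 0 ≤ T := sum_nonneg fun k _ ↦ abs_nonneg _
  calc _ ≤ ((N : ℝ) - 2) * ∑ i ∈ Icc 1 N, T / 2 * |g i - g (i - 1)| :=
        sum_sum_ite_far_le (by omega) (fun i _ ↦ by positivity) fun i hi j hj hfar ↦
          sign_mul_abs_rpow_mul_le (hkernel i hi j hj hfar) _
    _ = ((N : ℝ) - 2) / 2 * T ^ 2 := by rw [← mul_sum, ← hT]; ring
    _ ≤ _ := sub_two_div_two_mul_sq_sum_abs_le (by omega) _
end
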